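/- arXiv:2301.08728 — 3 statements merged into one kernel-verified Lean document; each statement's English description precedes it below -/
import Mathlib

section
/- For all real numbers a > 0 and b ≥ 0, ∫₀^∞ t^{-3/2} exp(−a²/(4t) − b·t) dt = (2√π / a) · exp(−a·√b). -/
open MeasureTheory
open Real Set

lemma image_sub_div (c : ℝ) (hc : 0 < c) :
    (fun u : ℝ => u - c / u) '' Ioi 0 = univ := by
  apply eq_univ_of_forall
  intro v
  have hs2 : v ^ 2 + 4 * c > 0 := by nlinarith [sq_nonneg v]
  set s := Real.sqrt (v ^ 2 + 4 * c) with hsdef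
  have hs : s ^ 2 = v ^ 2 + 4 * c := Real.sq_sqrt hs2.le
  have h1 : |v| < s := by
    rw [hsdef, ← Real.sqrt_sq_eq_abs]
    exact Real.sqrt_lt_sqrt (sq_nonneg v) (by linarith)
  obtain ⟨hl, hr⟩ := abs_lt.mp h1
  have hx : (0:ℝ) < (v + s) / 2 := by linarith
  refine ⟨(v + s) / 2, mem_Ioi.mpr hx, ?_⟩
  have hx' : v + s ≠ 0 := by linarith
  field_simp
  nlinarith [hs]

lemma image_c_div (c : ℝ) (hc : 0 < c) :
    (fun u : ℝ => c / u) '' Ioi 0 = Ioi 0 := by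
  ext t
  constructor
  · rintro ⟨u, hu, rfl⟩
    exact mem_Ioi.mpr (div_pos hc (mem_Ioi.mp hu))
  · intro ht
    exact ⟨c / t, mem_Ioi.mpr (div_pos hc (mem_Ioi.mp ht)), by
      field_simp⟩

lemma integrableOn_glasser (c : ℝ) (hc : 0 < c) :
    IntegrableOn (fun u : ℝ => Real.exp (-(u - c / u) ^ 2)) (Ioi 0) := by
  have hg : IntegrableOn (fun u : ℝ => Real.exp (2 * c) * Real.exp (-u ^ 2)) (Ioi 0) := by
    apply Integrable.const_mul
    have := (integrable_exp_neg_mul_sq (by norm_num : (0:ℝ) < 1)).integrableOn (s := Ioi 0)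
    simpa [IntegrableOn] using this
  apply Integrable.mono hg
  · apply ContinuousOn.aestronglyMeasurable _ measurableSet_Ioi
    have h0 : ∀ x ∈ Ioi (0:ℝ), x ≠ 0 := fun x hx => ne_of_gt (mem_Ioi.mp hx)
    exact (Real.continuous_exp.comp_continuousOn
      (((continuousOn_id.sub (continuousOn_const.div continuousOn_id h0)).pow 2).neg))
  · filter_upwards [ae_restrict_mem measurableSet_Ioi] with x hx
    have hx0 : x ≠ 0 := ne_of_gt (mem_Ioi.mp hx)
    rw [Real.norm_eq_abs, Real.norm_eq_abs, abs_of_pos (Real.exp_pos _),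
      abs_of_pos (by positivity), ← Real.exp_add]
    apply Real.exp_le_exp.mpr
    have hcx : x * (c / x) = c := mul_div_cancel₀ c hx0
    nlinarith [sq_nonneg (c / x)]

lemma glasser (c : ℝ) (hc : 0 < c) :
    ∫ u in Ioi (0:ℝ), Real.exp (-(u - c / u) ^ 2) = Real.sqrt π / 2 := by
  set f : ℝ → ℝ := fun u => u - c / u with hf
  have hderiv : ∀ x ∈ Ioi (0:ℝ), HasDerivWithinAt f (1 + c / x ^ 2) (Ioi 0) x := by
    intro x hx
    have hx' : x ≠ 0 := ne_of_gt (mem_Ioi.mp hx)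
    have h := (hasDerivAt_id x).sub ((hasDerivAt_const x c).div (hasDerivAt_id x) hx')
    have h2 : HasDerivAt f (1 + c / x ^ 2) x := by
      refine h.congr_deriv ?_
      simp only [id_eq]
      field_simp
      ring
    exact h2.hasDerivWithinAt
  have hmono : StrictMonoOn f (Ioi 0) := by
    intro x hx y hy hxy
    have h2 : c / y < c / x := div_lt_div_of_pos_left hc (mem_Ioi.mp hx) hxy
    simp only [hf]
    linarith
  have key := integral_image_eq_integral_abs_deriv_smul measurableSet_Ioi hderiv
    hmono.injOn (fun v => Real.exp (-v ^ 2))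
  rw [image_sub_div c hc, Measure.restrict_univ] at key
  have hgauss : ∫ v : ℝ, Real.exp (-v ^ 2) = Real.sqrt π := by
    have := integral_gaussian 1
    simpa using this
  rw [hgauss] at key
  -- second substitution: u ↦ c / u
  have hderiv2 : ∀ x ∈ Ioi (0:ℝ), HasDerivWithinAt (fun u : ℝ => c / u)
      (-(c / x ^ 2)) (Ioi 0) x := by
    intro x hx
    have hx' : x ≠ 0 := ne_of_gt (mem_Ioi.mp hx)
    have h := (hasDerivAt_const x c).div (hasDerivAt_id x) hx'
    have h2 : HasDerivAt (fun u : ℝ => c / u) (-(c / x ^ 2)) x := by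
      refine h.congr_deriv ?_
      simp only [id_eq]
      field_simp
      ring
    exact h2.hasDerivWithinAt
  have hanti : StrictAntiOn (fun u : ℝ => c / u) (Ioi 0) := by
    intro x hx y hy hxy
    exact div_lt_div_of_pos_left hc (mem_Ioi.mp hx) hxy
  have key2 := integral_image_eq_integral_abs_deriv_smul measurableSet_Ioi hderiv2
    hanti.injOn (fun v => Real.exp (-(v - c / v) ^ 2))
  rw [image_c_div c hc] at key2
  have key2' : ∫ x in Ioi (0:ℝ), (c / x ^ 2) * Real.exp (-(x - c / x) ^ 2)
      = ∫ u in Ioi (0:ℝ), Real.exp (-(u - c / u) ^ 2) := by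
    rw [key2]
    apply setIntegral_congr_fun measurableSet_Ioi
    intro x hx
    have hx0 : x ≠ 0 := ne_of_gt (mem_Ioi.mp hx)
    have h1 : |(-(c / x ^ 2))| = c / x ^ 2 := by
      rw [abs_neg, abs_of_pos (by positivity)]
    have h2 : c / (c / x) = x := by field_simp
    simp only [smul_eq_mul, h1, h2]
    ring_nf
  -- integrability of second integrand
  have hint2 : IntegrableOn (fun x : ℝ => (c / x ^ 2) * Real.exp (-(x - c / x) ^ 2))
      (Ioi 0) := by
    have := (integrableOn_image_iff_integrableOn_abs_deriv_smul measurableSet_Ioi hderiv2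
      hanti.injOn (fun v => Real.exp (-(v - c / v) ^ 2))).mp
      (by rw [image_c_div c hc]; exact integrableOn_glasser c hc)
    apply this.congr_fun _ measurableSet_Ioi
    intro x hx
    have hx0 : x ≠ 0 := ne_of_gt (mem_Ioi.mp hx)
    have h1 : |(-(c / x ^ 2))| = c / x ^ 2 := by
      rw [abs_neg, abs_of_pos (by positivity)]
    have h2 : c / (c / x) = x := by field_simp
    simp only [smul_eq_mul, h1, h2]
    ring_nf
  -- combine
  have hsplit : Real.sqrt π = (∫ u in Ioi (0:ℝ), Real.exp (-(u - c / u) ^ 2))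
      + ∫ x in Ioi (0:ℝ), (c / x ^ 2) * Real.exp (-(x - c / x) ^ 2) := by
    rw [key, ← integral_add (integrableOn_glasser c hc) hint2]
    apply setIntegral_congr_fun measurableSet_Ioi
    intro x hx
    have hx0 : 0 < x := mem_Ioi.mp hx
    have h1 : |1 + c / x ^ 2| = 1 + c / x ^ 2 := abs_of_pos (by positivity)
    simp only [smul_eq_mul, h1, hf]
    ring
  rw [key2'] at hsplit
  linarith

lemma integral_exp_neg_sq_sub_sq_div (c : ℝ) (hc : 0 ≤ c) :
    ∫ u in Ioi (0:ℝ), Real.exp (-u ^ 2 - c ^ 2 / u ^ 2)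
      = Real.sqrt π / 2 * Real.exp (-(2 * c)) := by
  rcases eq_or_lt_of_le hc with rfl | hc
  · simp only [ne_eq, OfNat.ofNat_ne_zero, not_false_eq_true, zero_pow, zero_div,
      sub_zero, mul_zero, neg_zero, Real.exp_zero, mul_one]
    have := integral_gaussian_Ioi 1
    simpa using this
  · have heq : ∀ x ∈ Ioi (0:ℝ), Real.exp (-x ^ 2 - c ^ 2 / x ^ 2)
        = Real.exp (-(2 * c)) * Real.exp (-(x - c / x) ^ 2) := by
      intro x hx
      have hx0 : x ≠ 0 := ne_of_gt (mem_Ioi.mp hx)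
      rw [← Real.exp_add]
      congr 1
      field_simp
      ring
    rw [setIntegral_congr_fun measurableSet_Ioi heq, integral_const_mul, glasser c hc]
    ring

lemma image_main (a : ℝ) (ha : 0 < a) :
    (fun u : ℝ => a ^ 2 / (4 * u ^ 2)) '' Ioi 0 = Ioi 0 := by
  ext t
  constructor
  · rintro ⟨u, hu, rfl⟩
    have hu0 : 0 < u := mem_Ioi.mp hu
    exact mem_Ioi.mpr (by positivity)
  · intro ht
    have ht0 : 0 < t := mem_Ioi.mp ht
    have hst : Real.sqrt t > 0 := Real.sqrt_pos.mpr ht0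
    refine ⟨a / (2 * Real.sqrt t), mem_Ioi.mpr (by positivity), ?_⟩
    have h : Real.sqrt t ^ 2 = t := Real.sq_sqrt ht0.le
    field_simp
    nlinarith [h]

/-- For `a > 0` and `b ≥ 0`,
`∫₀^∞ t^{-3/2} exp(−a²/(4t) − b t) dt = (2√π / a) exp(−a √b)`. -/
theorem integral_rpow_exp_sub_quarter_sq (a b : ℝ) (ha : 0 < a) (hb : 0 ≤ b) :
    ∫ t in Set.Ioi (0 : ℝ), t ^ (-(3 : ℝ) / 2) * Real.exp (-a ^ 2 / (4 * t) - b * t)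
      = (2 * Real.sqrt Real.pi / a) * Real.exp (-a * Real.sqrt b) := by
  set f : ℝ → ℝ := fun u => a ^ 2 / (4 * u ^ 2) with hf
  have hderiv : ∀ x ∈ Ioi (0:ℝ), HasDerivWithinAt f (-(a ^ 2 / (2 * x ^ 3))) (Ioi 0) x := by
    intro x hx
    have hx0 : x ≠ 0 := ne_of_gt (mem_Ioi.mp hx)
    have h : HasDerivAt (fun u : ℝ => 4 * u ^ 2) (4 * (2 * x)) x := by
      simpa using ((hasDerivAt_pow 2 x).const_mul 4)
    have h2 := (hasDerivAt_const x (a ^ 2)).div h (by positivity)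
    have h3 : HasDerivAt f (-(a ^ 2 / (2 * x ^ 3))) x := by
      refine h2.congr_deriv ?_
      field_simp
      ring
    exact h3.hasDerivWithinAt
  have hanti : StrictAntiOn f (Ioi 0) := by
    intro x hx y hy hxy
    have hx0 : 0 < x := mem_Ioi.mp hx
    apply div_lt_div_of_pos_left (by positivity) (by positivity)
    nlinarith
  have key := integral_image_eq_integral_abs_deriv_smul measurableSet_Ioi hderiv
    hanti.injOn (fun t => t ^ (-(3:ℝ) / 2) * Real.exp (-a ^ 2 / (4 * t) - b * t))
  rw [image_main a ha] at key
  rw [key]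
  set c : ℝ := a * Real.sqrt b / 2 with hcdef
  have hc : 0 ≤ c := by positivity
  have heq : ∀ x ∈ Ioi (0:ℝ),
      |(-(a ^ 2 / (2 * x ^ 3)))| • ((f x) ^ (-(3:ℝ) / 2)
        * Real.exp (-a ^ 2 / (4 * f x) - b * f x))
      = (4 / a) * Real.exp (-x ^ 2 - c ^ 2 / x ^ 2) := by
    intro x hx
    have hx0 : 0 < x := mem_Ioi.mp hx
    have habs : |(-(a ^ 2 / (2 * x ^ 3)))| = a ^ 2 / (2 * x ^ 3) := by
      rw [abs_neg, abs_of_pos (by positivity)]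
    have hy : (0:ℝ) < a / (2 * x) := by positivity
    have hfx : f x = (a / (2 * x)) ^ 2 := by
      simp only [hf]; field_simp; ring
    have hrpow : (f x) ^ (-(3:ℝ) / 2) = (a / (2 * x)) ^ (-(3:ℝ)) := by
      rw [hfx, ← Real.rpow_natCast (a / (2 * x)) 2, ← Real.rpow_mul hy.le]
      norm_num
    have hrpow2 : (a / (2 * x)) ^ (-(3:ℝ)) = (2 * x / a) ^ 3 := by
      rw [show (-(3:ℝ)) = ((-3 : ℤ) : ℝ) by norm_num, Real.rpow_intCast, zpow_neg,
        ← inv_zpow, inv_div]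
      norm_cast
    have harg1 : -a ^ 2 / (4 * f x) = -x ^ 2 := by
      simp only [hf]; field_simp
    have harg2 : b * f x = c ^ 2 / x ^ 2 := by
      have hsb : Real.sqrt b ^ 2 = b := Real.sq_sqrt hb
      have hc2 : c ^ 2 = a ^ 2 * b / 4 := by
        rw [hcdef, div_pow, mul_pow, hsb]; ring
      rw [hc2]
      simp only [hf]
      field_simp
    rw [habs, hrpow, hrpow2, harg1, harg2, smul_eq_mul]
    have : -x ^ 2 - c ^ 2 / x ^ 2 = -x ^ 2 - c ^ 2 / x ^ 2 := rfl
    rw [show a ^ 2 / (2 * x ^ 3) * ((2 * x / a) ^ 3 * Real.exp (-x ^ 2 - c ^ 2 / x ^ 2))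
        = (a ^ 2 / (2 * x ^ 3) * (2 * x / a) ^ 3) * Real.exp (-x ^ 2 - c ^ 2 / x ^ 2) by ring]
    congr 1
    field_simp
    ring
  rw [setIntegral_congr_fun measurableSet_Ioi heq, integral_const_mul,
    integral_exp_neg_sq_sub_sq_div c hc]
  have h2c : -(2 * c) = -a * Real.sqrt b := by rw [hcdef]; ring
  rw [h2c]
  ring
end

section
/- For all real numbers s > 0 and a < 0, the series F_b(s,a) = Σ_{k=1}^∞ e^{k a} / k^s converges and F_b(s,a) = (1/Γ(s)) ∫₀^∞ t^{s−1} / (e^{t−a} − 1) dt. -/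
open MeasureTheory

private lemma be_summable (s a : ℝ) (hs : 0 < s) (ha : a < 0) :
    Summable fun k : ℕ => Real.exp (((k : ℝ) + 1) * a) / ((k : ℝ) + 1) ^ s := by
  have hr : Real.exp a < 1 := Real.exp_lt_one_iff.2 ha
  refine Summable.of_nonneg_of_le (fun k => by positivity) (fun k => ?_)
    ((summable_geometric_of_lt_one (Real.exp_pos a).le hr).mul_left (Real.exp a))
  have h1 : (1 : ℝ) ≤ ((k : ℝ) + 1) ^ s :=
    Real.one_le_rpow (by linarith [Nat.cast_nonneg (α := ℝ) k]) hs.le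
  have : Real.exp (((k : ℝ) + 1) * a) = Real.exp a * Real.exp a ^ k := by
    rw [← Real.exp_nat_mul, ← Real.exp_add]; ring_nf
  rw [div_le_iff₀ (by positivity)]
  calc Real.exp (((k : ℝ) + 1) * a) = Real.exp a * Real.exp a ^ k * 1 := by rw [this, mul_one]
    _ ≤ Real.exp a * Real.exp a ^ k * (((k : ℝ) + 1) ^ s) := by
        apply mul_le_mul_of_nonneg_left h1 (by positivity)

/-- The Bose–Einstein spectral function: for `s > 0` and `a < 0`, the series
`F_b(s,a) = Σ_{k≥1} e^{k a} / k^s` converges and equals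
`(1/Γ(s)) ∫₀^∞ t^{s−1} / (e^{t−a} − 1) dt`. -/
theorem bose_einstein_spectral_function (s a : ℝ) (hs : 0 < s) (ha : a < 0) :
    (Summable fun k : ℕ => Real.exp (((k : ℝ) + 1) * a) / ((k : ℝ) + 1) ^ s) ∧
    (∑' k : ℕ, Real.exp (((k : ℝ) + 1) * a) / ((k : ℝ) + 1) ^ s)
      = (1 / Real.Gamma s) *
        ∫ t in Set.Ioi (0 : ℝ), t ^ (s - 1) / (Real.exp (t - a) - 1) := by
  have hsum := be_summable s a hs ha
  refine ⟨hsum, ?_⟩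
  set F : ℕ → ℝ → ℝ := fun k t => t ^ (s - 1) * Real.exp (-((((k : ℝ) + 1)) * (t - a))) with hF
  have hk1 : ∀ k : ℕ, (0 : ℝ) < (k : ℝ) + 1 := fun k => by positivity
  -- rewrite F k t
  have hFeq : ∀ k : ℕ, ∀ t : ℝ, F k t
      = t ^ (s - 1) * Real.exp (-(((k : ℝ) + 1) * t)) * Real.exp (((k : ℝ) + 1) * a) := by
    intro k t
    rw [hF, mul_assoc, ← Real.exp_add]
    ring_nf
  -- integrability
  have hFint : ∀ k : ℕ, IntegrableOn (F k) (Set.Ioi 0) := by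
    intro k
    have h := (integrableOn_rpow_mul_exp_neg_mul_rpow (p := 1) (s := s - 1)
      (b := (k : ℝ) + 1) (by linarith) one_pos (hk1 k)).mul_const (Real.exp (((k : ℝ) + 1) * a))
    exact MeasureTheory.IntegrableOn.congr_fun h
      (fun t ht => by rw [hFeq k t, Real.rpow_one, neg_mul]) measurableSet_Ioi
  -- value of each integral
  have hFval : ∀ k : ℕ, ∫ t in Set.Ioi (0 : ℝ), F k t
      = (1 / ((k : ℝ) + 1)) ^ s * Real.Gamma s * Real.exp (((k : ℝ) + 1) * a) := by
    intro k
    have : ∀ t ∈ Set.Ioi (0 : ℝ), F k t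
        = (fun t => t ^ (s - 1) * Real.exp (-(((k : ℝ) + 1) * t))) t
          * Real.exp (((k : ℝ) + 1) * a) := fun t _ => hFeq k t
    rw [setIntegral_congr_fun measurableSet_Ioi this, integral_mul_const,
      Real.integral_rpow_mul_exp_neg_mul_Ioi hs (hk1 k)]
  -- nonnegativity of F on Ioi 0
  have hFnonneg : ∀ k : ℕ, ∀ t ∈ Set.Ioi (0 : ℝ), 0 ≤ F k t := by
    intro k t ht
    have : (0 : ℝ) < t := ht
    positivity
  -- summability of the norm integrals
  have hnorm : ∀ k : ℕ, ∫ t in Set.Ioi (0 : ℝ), ‖F k t‖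
      = (1 / ((k : ℝ) + 1)) ^ s * Real.Gamma s * Real.exp (((k : ℝ) + 1) * a) := by
    intro k
    rw [← hFval k]
    exact setIntegral_congr_fun measurableSet_Ioi
      (fun t ht => Real.norm_of_nonneg (hFnonneg k t ht))
  have hsum2 : Summable fun k : ℕ =>
      (1 / ((k : ℝ) + 1)) ^ s * Real.Gamma s * Real.exp (((k : ℝ) + 1) * a) := by
    have := (hsum.mul_left (Real.Gamma s))
    refine this.congr (fun k => ?_)
    rw [Real.div_rpow (by norm_num) (hk1 k).le, Real.one_rpow]
    field_simp
  -- swap sum and integral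
  have hswap : (∑' k : ℕ, ∫ t in Set.Ioi (0 : ℝ), F k t)
      = ∫ t in Set.Ioi (0 : ℝ), ∑' k : ℕ, F k t := by
    refine integral_tsum_of_summable_integral_norm hFint ?_
    refine hsum2.congr (fun k => (hnorm k).symm)
  -- pointwise identity of the tsum
  have hpt : ∀ t ∈ Set.Ioi (0 : ℝ),
      (∑' k : ℕ, F k t) = t ^ (s - 1) / (Real.exp (t - a) - 1) := by
    intro t ht
    have hta : (0 : ℝ) < t - a := by have : (0:ℝ) < t := ht; linarith
    set r : ℝ := Real.exp (-(t - a)) with hr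
    have hr0 : 0 < r := Real.exp_pos _
    have hr1 : r < 1 := Real.exp_lt_one_iff.2 (by linarith)
    have hFr : ∀ k : ℕ, F k t = t ^ (s - 1) * r * r ^ k := by
      intro k
      rw [hF, hr, ← Real.exp_nat_mul, mul_assoc, ← Real.exp_add]
      ring_nf
    calc (∑' k : ℕ, F k t) = ∑' k : ℕ, t ^ (s - 1) * r * r ^ k := by
          exact tsum_congr hFr
      _ = t ^ (s - 1) * r * (1 - r)⁻¹ := by
          rw [tsum_mul_left, tsum_geometric_of_lt_one hr0.le hr1]
      _ = t ^ (s - 1) / (Real.exp (t - a) - 1) := by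
          have he : Real.exp (t - a) = r⁻¹ := by
            rw [hr, ← Real.exp_neg, neg_neg]
          rw [he]
          have h1r : 1 - r ≠ 0 := by linarith
          field_simp
  rw [← setIntegral_congr_fun measurableSet_Ioi hpt, ← hswap]
  have hG : Real.Gamma s ≠ 0 := (Real.Gamma_pos_of_pos hs).ne'
  rw [tsum_congr hFval]
  have hterm : ∀ k : ℕ, (1 / ((k : ℝ) + 1)) ^ s * Real.Gamma s * Real.exp (((k : ℝ) + 1) * a)
      = Real.Gamma s * (Real.exp (((k : ℝ) + 1) * a) / ((k : ℝ) + 1) ^ s) := by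
    intro k
    rw [Real.div_rpow (by norm_num) (hk1 k).le, Real.one_rpow]
    field_simp
  rw [tsum_congr hterm, tsum_mul_left]
  field_simp
  refine tsum_congr (fun k => ?_)
  ring_nf
end

section
/- Let m ≥ 1, N ≥ 1, κ < 1 a real number, and let Γ¹, …, Γᵐ be N×N complex matrices satisfying the Clifford relations Γⁱ Γʲ + Γʲ Γⁱ = −2κ δ^{ij} I for all i, j. Then π^{−m/2} ∫_{ℝᵐ} tr exp( −(|ξ|² I + T(ξ)²) ) dξ = (1−κ)^{−m/2} · N, where T(ξ) = Σ_{j=1}^m ξ_j Γʲ and |ξ|² = Σ_j ξ_j². (This computes the coefficient γ in the t^{1/2} term of the heat trace asymptotics for the Grubb–Gilkey–Smith oblique boundary value problem in the Clifford case with Π = I.) -/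
open MeasureTheory Matrix

private lemma clifford_sq {m N : ℕ} {κ : ℝ} (Γ : Fin m → Matrix (Fin N) (Fin N) ℂ)
    (hΓ : ∀ i j, Γ i * Γ j + Γ j * Γ i
      = (if i = j then (-2 * (κ : ℂ)) else 0) • (1 : Matrix (Fin N) (Fin N) ℂ))
    (c : Fin m → ℂ) :
    (∑ j, c j • Γ j) ^ 2 = ((-κ) * ∑ j, c j ^ 2) • (1 : Matrix (Fin N) (Fin N) ℂ) := by
  have h2 : (2 : ℂ) • ((∑ j, c j • Γ j) ^ 2)
      = (2 : ℂ) • (((-κ) * ∑ j, c j ^ 2) • (1 : Matrix (Fin N) (Fin N) ℂ)) := by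
    have hS : (∑ j, c j • Γ j) ^ 2 = ∑ i, ∑ j, (c i * c j) • (Γ i * Γ j) := by
      rw [sq, Finset.sum_mul_sum]
      refine Finset.sum_congr rfl fun i _ => Finset.sum_congr rfl fun j _ => ?_
      rw [smul_mul_assoc, mul_smul_comm, smul_smul]
    have hS' : (∑ j, c j • Γ j) ^ 2 = ∑ i, ∑ j, (c i * c j) • (Γ j * Γ i) := by
      rw [hS, Finset.sum_comm]
      refine Finset.sum_congr rfl fun j _ => Finset.sum_congr rfl fun i _ => ?_
      rw [mul_comm (c j) (c i)]
    calc (2 : ℂ) • ((∑ j, c j • Γ j) ^ 2)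
        = ∑ i, ∑ j, (c i * c j) • (Γ i * Γ j + Γ j * Γ i) := by
          rw [two_smul]
          nth_rewrite 1 [hS]; nth_rewrite 1 [hS']
          rw [← Finset.sum_add_distrib]
          refine Finset.sum_congr rfl fun i _ => ?_
          rw [← Finset.sum_add_distrib]
          exact Finset.sum_congr rfl fun j _ => (smul_add _ _ _).symm
      _ = ∑ i, (c i * c i) • ((-2 * (κ : ℂ)) • (1 : Matrix (Fin N) (Fin N) ℂ)) := by
          refine Finset.sum_congr rfl fun i _ => ?_
          rw [Finset.sum_eq_single i]
          · rw [hΓ i i, if_pos rfl]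
          · intro j _ hj; rw [hΓ i j, if_neg (Ne.symm hj)]; simp
          · simp
      _ = (2 : ℂ) • (((-κ) * ∑ j, c j ^ 2) • (1 : Matrix (Fin N) (Fin N) ℂ)) := by
          simp_rw [smul_smul, sq, Finset.mul_sum]
          rw [Finset.sum_smul]
          refine Finset.sum_congr rfl fun i _ => ?_
          congr 1
          ring
  exact smul_right_injective _ (two_ne_zero) h2

private lemma exp_smul_one_trace (a : ℂ) (N : ℕ) :
    Matrix.trace (NormedSpace.exp (a • (1 : Matrix (Fin N) (Fin N) ℂ)))
      = Complex.exp a * N := by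
  have h1 : a • (1 : Matrix (Fin N) (Fin N) ℂ) = diagonal (fun _ => a) := by
    ext i j
    rcases eq_or_ne i j with h | h <;> simp [h, Matrix.one_apply, Matrix.diagonal_apply]
  rw [h1, Matrix.exp_diagonal, trace_diagonal]
  simp [Complex.exp_eq_exp_ℂ, mul_comm]

private lemma rpow_calc (m : ℕ) (b : ℝ) (hb : 0 < b) :
    Real.pi ^ (-(m : ℝ) / 2) * (Real.sqrt (Real.pi / b)) ^ m = b ^ (-(m : ℝ) / 2) := by
  have hπ := Real.pi_pos
  rw [Real.sqrt_eq_rpow, ← Real.rpow_natCast (_ ^ (1/2 : ℝ)) m,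
    ← Real.rpow_mul (by positivity), Real.div_rpow hπ.le hb.le]
  have h1 : Real.pi ^ (-(m:ℝ)/2) * Real.pi ^ (1/2 * (m:ℝ)) = 1 := by
    rw [← Real.rpow_add hπ, show -(m:ℝ)/2 + 1/2 * m = 0 by ring, Real.rpow_zero]
  calc Real.pi ^ (-(m:ℝ)/2) * (Real.pi ^ (1/2*(m:ℝ)) / b ^ (1/2*(m:ℝ)))
      = (Real.pi ^ (-(m:ℝ)/2) * Real.pi ^ (1/2*(m:ℝ))) / b ^ (1/2*(m:ℝ)) := by ring
    _ = 1 / b ^ (1/2*(m:ℝ)) := by rw [h1]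
    _ = b ^ (-(1/2*(m:ℝ))) := by rw [Real.rpow_neg hb.le, one_div]
    _ = b ^ (-(m:ℝ)/2) := by rw [show -(1/2*(m:ℝ)) = -(m:ℝ)/2 by ring]

/-- The coefficient `γ` of the oblique (Grubb–Gilkey–Smith) boundary value problem in the
Clifford case: if `Γ¹,…,Γᵐ` satisfy `ΓⁱΓʲ + ΓʲΓⁱ = −2κ δ^{ij} I` with `κ < 1`, then
`π^{−m/2} ∫_{ℝᵐ} tr exp(−(|ξ|² I + T(ξ)²)) dξ = (1−κ)^{−m/2} N`,
where `T(ξ) = Σ_j ξ_j Γʲ`. -/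
theorem oblique_gamma_clifford (m N : ℕ) (hm : 1 ≤ m) (hN : 1 ≤ N)
    (κ : ℝ) (hκ : κ < 1) (Γ : Fin m → Matrix (Fin N) (Fin N) ℂ)
    (hΓ : ∀ i j, Γ i * Γ j + Γ j * Γ i
      = (if i = j then (-2 * (κ : ℂ)) else 0) • (1 : Matrix (Fin N) (Fin N) ℂ)) :
    ((Real.pi ^ (-(m : ℝ) / 2) : ℝ) : ℂ) *
      ∫ ξ : Fin m → ℝ,
        Matrix.trace
          (NormedSpace.exp
            (-((((∑ j, ξ j ^ 2 : ℝ)) : ℂ) • (1 : Matrix (Fin N) (Fin N) ℂ) +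
              (∑ j, ((ξ j : ℝ) : ℂ) • Γ j) ^ 2)))
      = (((1 - κ) ^ (-(m : ℝ) / 2) : ℝ) : ℂ) * (N : ℂ) := by
  have hb : (0:ℝ) < 1 - κ := by linarith
  have hpt : ∀ ξ : Fin m → ℝ,
      Matrix.trace
          (NormedSpace.exp
            (-((((∑ j, ξ j ^ 2 : ℝ)) : ℂ) • (1 : Matrix (Fin N) (Fin N) ℂ) +
              (∑ j, ((ξ j : ℝ) : ℂ) • Γ j) ^ 2)))
      = (N : ℂ) * ∏ j, ((Real.exp (-(1-κ) * ξ j ^ 2) : ℝ) : ℂ) := by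
    intro ξ
    rw [clifford_sq Γ hΓ]
    have hcast : (∑ j, ((ξ j : ℝ) : ℂ) ^ 2) = ((∑ j, ξ j ^ 2 : ℝ) : ℂ) := by
      push_cast; rfl
    rw [hcast]
    have harg : -((((∑ j, ξ j ^ 2 : ℝ)) : ℂ) • (1 : Matrix (Fin N) (Fin N) ℂ) +
          ((-κ : ℂ) * ((∑ j, ξ j ^ 2 : ℝ) : ℂ)) • (1 : Matrix (Fin N) (Fin N) ℂ))
        = ((((κ - 1) * ∑ j, ξ j ^ 2 : ℝ)) : ℂ) • (1 : Matrix (Fin N) (Fin N) ℂ) := by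
      rw [← add_smul, ← neg_smul]
      congr 1
      push_cast
      ring
    rw [harg, exp_smul_one_trace, ← Complex.ofReal_exp]
    have hexp : Real.exp ((κ - 1) * ∑ j, ξ j ^ 2) = ∏ j, Real.exp (-(1-κ) * ξ j ^ 2) := by
      rw [← Real.exp_sum]
      congr 1
      rw [Finset.mul_sum]
      exact Finset.sum_congr rfl fun j _ => by ring
    rw [hexp]
    push_cast
    ring
  simp_rw [hpt]
  rw [integral_const_mul,
    integral_fintype_prod_volume_eq_pow (ι := Fin m) (fun x : ℝ => ((Real.exp (-(1-κ) * x ^ 2) : ℝ) : ℂ)),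
    show (∫ x : ℝ, ((Real.exp (-(1-κ) * x ^ 2) : ℝ) : ℂ)) = (((∫ x : ℝ, Real.exp (-(1-κ) * x ^ 2)) : ℝ) : ℂ) from integral_ofReal,
    integral_gaussian, Fintype.card_fin, ← Complex.ofReal_pow]
  rw [show (((Real.pi ^ (-(m : ℝ) / 2) : ℝ) : ℂ)) *
      ((N : ℂ) * ((((Real.sqrt (Real.pi / (1-κ))) ^ m : ℝ)) : ℂ))
      = ((((Real.pi ^ (-(m : ℝ) / 2) * (Real.sqrt (Real.pi / (1-κ))) ^ m : ℝ)) : ℂ)) * N by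
    push_cast; ring]
  rw [rpow_calc m (1-κ) hb]
end
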